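/- There exists a cascade (X,f) on a complete metric space that is thickly sensitive but not syndetically sensitive. -/

import Mathlib

/-!
Place compact intervals ("rungs") `I m = [a m, a m + c m]` on the real line, consecutive rungs
separated by gaps of length `1`, so that their union `X` is closed and every rung is open in `X`.
The cascade maps each `I m` affinely onto `I (m + 1)`, so `fᵏ` stretches `I n` by the factor
`c (n + k) / c n`. Every nonempty open set contains two distinct points of some rung; if `c` exceeds
every bound on arbitrarily long runs of indices, their images are more than `1` apart on
arbitrarily long runs of times, which is thick sensitivity. If moreover `c` falls below every
`ε > 0` on arbitrarily long runs, the open rung `I 0` has images `I m` of diameter at most `ε` on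
arbitrarily long runs, so its times of `ε`-expansion are not syndetic. The lengths `j + 1` and
`1 / (j + 1)` on the blocks `[j², (j + 1)²)` with `j` even, resp. odd, do both.
-/

/-- `A ⊆ ℕ` is syndetic: bounded gaps. -/
def IsSyndetic (A : Set ℕ) : Prop := ∃ N : ℕ, ∀ t : ℕ, ∃ k < N, t + k ∈ A

/-- `A ⊆ ℕ` is thick: contains arbitrarily long runs of consecutive integers. -/
def IsThick (A : Set ℕ) : Prop := ∀ n : ℕ, ∃ t : ℕ, ∀ k ≤ n, t + k ∈ A

/-- `N(A, ε) = {n : diam (fⁿ(A)) > ε}` for a cascade `f`. -/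
def sensTimes {X : Type*} [PseudoMetricSpace X] (f : X → X) (A : Set X) (ε : ℝ) : Set ℕ :=
  {n : ℕ | ENNReal.ofReal ε < EMetric.diam (f^[n] '' A)}

/-- Sensitivity of a cascade. -/
def Sensitive {X : Type*} [PseudoMetricSpace X] (f : X → X) : Prop :=
  ∃ ε > (0 : ℝ), ∀ U : Set X, IsOpen U → U.Nonempty → (sensTimes f U ε).Nonempty

/-- Syndetic sensitivity of a cascade. -/
def SyndeticallySensitive {X : Type*} [PseudoMetricSpace X] (f : X → X) : Prop :=
  ∃ ε > (0 : ℝ), ∀ U : Set X, IsOpen U → U.Nonempty → IsSyndetic (sensTimes f U ε)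

/-- Thick sensitivity of a cascade. -/
def ThicklySensitive {X : Type*} [PseudoMetricSpace X] (f : X → X) : Prop :=
  ∃ ε > (0 : ℝ), ∀ U : Set X, IsOpen U → U.Nonempty → IsThick (sensTimes f U ε)

/-- Cofinite sensitivity of a cascade. -/
def CofinitelySensitive {X : Type*} [PseudoMetricSpace X] (f : X → X) : Prop :=
  ∃ ε > (0 : ℝ), ∀ U : Set X, IsOpen U → U.Nonempty → (sensTimes f U ε)ᶜ.Finite

open Set Filter

theorem IsThick.not_isSyndetic_compl {A : Set ℕ} (hA : IsThick A) : ¬ IsSyndetic Aᶜ := by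
  rintro ⟨N, hN⟩
  obtain ⟨t, ht⟩ := hA N
  obtain ⟨k, hkN, hk⟩ := hN t
  exact hk (ht k hkN.le)

theorem IsSyndetic.mono {A B : Set ℕ} (hA : IsSyndetic A) (hAB : A ⊆ B) : IsSyndetic B :=
  hA.imp fun _ hN t => (hN t).imp fun _ hk => ⟨hk.1, hAB hk.2⟩

theorem IsThick.mono {A B : Set ℕ} (hA : IsThick A) (hAB : A ⊆ B) : IsThick B :=
  fun n => (hA n).imp fun _ ht k hk => hAB (ht k hk)

theorem IsThick.preimage_add_left {A : Set ℕ} (hA : IsThick A) (n : ℕ) :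
    IsThick {k | n + k ∈ A} := by
  intro L
  obtain ⟨t, ht⟩ := hA (n + L)
  refine ⟨t, fun k hk => ?_⟩
  simpa only [mem_ofPred_eq, add_left_comm] using ht (n + k) (by omega)

/-- `Nat.sqrt` is constant on the block `[j², (j + 1)²)`, of length `2 j + 1`. -/
theorem isThick_setOf_sqrt {P : ℕ → Prop} (hP : ∃ᶠ j in atTop, P j) :
    IsThick {m | P (Nat.sqrt m)} := by
  intro L
  obtain ⟨j, hLj, hj⟩ := frequently_atTop.1 hP L
  refine ⟨j ^ 2, fun k hk => ?_⟩
  simpa only [mem_ofPred_eq, Nat.sqrt_add_eq' j (by omega : k ≤ j + j)]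

theorem exists_mem_Icc_dist_eq {a b x ℓ : ℝ} (hx : x ∈ Icc a b) (hℓ : 0 ≤ ℓ)
    (hab : 2 * ℓ ≤ b - a) :
    ∃ y ∈ Icc a b, dist y x = ℓ := by
  rcases le_total (x + ℓ) b with h | h
  · exact ⟨x + ℓ, ⟨by linarith [hx.1], h⟩, by simp [abs_of_nonneg hℓ]⟩
  · exact ⟨x - ℓ, ⟨by linarith, by linarith [hx.2]⟩, by simp [abs_of_nonneg hℓ]⟩

noncomputable section

namespace Ladder

variable (c : ℕ → ℝ)

def start : ℕ → ℝ
  | 0 => 0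
  | m + 1 => start m + c m + 1

def rung (m : ℕ) : Set ℝ := Icc (start c m) (start c m + c m)

def space : Set ℝ := ⋃ m, rung c m

def rungMap (m n : ℕ) (x : ℝ) : ℝ := start c n + c n / c m * (x - start c m)

variable {c}

theorem start_add_le (hc : ∀ m, 0 < c m) {m n : ℕ} (hmn : m < n) :
    start c m + c m + 1 ≤ start c n := by
  have hmono : Monotone (start c) :=
    monotone_nat_of_le_succ fun k => by simp only [start]; linarith [hc k]
  exact hmono hmn

theorem natCast_le_start (hc : ∀ m, 0 < c m) (m : ℕ) : (m : ℝ) ≤ start c m := by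
  induction m with
  | zero => simp [start]
  | succ m ih => simp only [start, Nat.cast_succ]; linarith [hc m]

theorem eq_of_mem_rung_of_mem_Ioo (hc : ∀ m, 0 < c m) {m n : ℕ} {x : ℝ} (hm : x ∈ rung c m)
    (hn : x ∈ Ioo (start c n - 1) (start c n + c n + 1)) : m = n := by
  obtain ⟨hm₁, hm₂⟩ := hm
  obtain ⟨hn₁, hn₂⟩ := hn
  rcases lt_trichotomy m n with h | h | h
  · linarith [start_add_le hc h]
  · exact h
  · linarith [start_add_le hc h]

theorem mem_Ioo_of_mem_rung {n : ℕ} {x : ℝ} (hx : x ∈ rung c n) :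
    x ∈ Ioo (start c n - 1) (start c n + c n + 1) :=
  ⟨by linarith [hx.1], by linarith [hx.2]⟩

theorem mem_rung_of_mem_Ioo (hc : ∀ m, 0 < c m) {n : ℕ} {x : ℝ} (hx : x ∈ space c)
    (hn : x ∈ Ioo (start c n - 1) (start c n + c n + 1)) : x ∈ rung c n := by
  obtain ⟨m, hm⟩ := mem_iUnion.1 hx
  rwa [← eq_of_mem_rung_of_mem_Ioo hc hm hn]

theorem isOpen_preimage_rung (hc : ∀ m, 0 < c m) (n : ℕ) :
    IsOpen (Subtype.val ⁻¹' rung c n : Set (space c)) := by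
  have : (Subtype.val ⁻¹' rung c n : Set (space c)) =
      Subtype.val ⁻¹' Ioo (start c n - 1) (start c n + c n + 1) :=
    ext fun x => ⟨mem_Ioo_of_mem_rung, mem_rung_of_mem_Ioo hc x.2⟩
  rw [this]
  exact isOpen_Ioo.preimage continuous_subtype_val

/-- Only the rungs with `m < x + 1` meet `(x - 1, x + 1)`, since `m ≤ start c m`. -/
theorem isClosed_space (hc : ∀ m, 0 < c m) : IsClosed (space c) := by
  refine LocallyFinite.isClosed_iUnion (fun x => ?_) fun m => isClosed_Icc
  refine ⟨Ioo (x - 1) (x + 1), Ioo_mem_nhds (by linarith) (by linarith), ?_⟩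
  refine (finite_Iio ⌈x + 1⌉₊).subset fun m ⟨y, hym, hyx⟩ => ?_
  exact Nat.lt_ceil.2 (by linarith [natCast_le_start hc m, hym.1, hyx.2])

theorem rungMap_mem_rung (hc : ∀ m, 0 < c m) {m n : ℕ} {x : ℝ} (hx : x ∈ rung c m) :
    rungMap c m n x ∈ rung c n := by
  have h₀ : 0 ≤ (x - start c m) / c m := div_nonneg (by linarith [hx.1]) (hc m).le
  have h₁ : (x - start c m) / c m ≤ 1 := div_le_one_of_le₀ (by linarith [hx.2]) (hc m).le
  have key : c n / c m * (x - start c m) = c n * ((x - start c m) / c m) := by ring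
  simp only [rungMap, rung, key, mem_Icc, le_add_iff_nonneg_right, add_le_add_iff_left]
  exact ⟨mul_nonneg (hc n).le h₀, mul_le_of_le_one_right (hc n).le h₁⟩

theorem rungMap_rungMap (hc : ∀ m, 0 < c m) (m n p : ℕ) (x : ℝ) :
    rungMap c n p (rungMap c m n x) = rungMap c m p x := by
  have := (hc n).ne'
  simp only [rungMap]
  field_simp
  ring

theorem rungMap_self (hc : ∀ m, 0 < c m) (m : ℕ) (x : ℝ) : rungMap c m m x = x := by
  simp [rungMap, div_self (hc m).ne']

theorem dist_rungMap (hc : ∀ m, 0 < c m) (m n : ℕ) (x y : ℝ) :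
    dist (rungMap c m n x) (rungMap c m n y) = c n / c m * dist x y := by
  rw [Real.dist_eq, Real.dist_eq, ← abs_of_pos (div_pos (hc n) (hc m)), ← abs_mul]
  congr 1
  simp only [rungMap]
  ring

def index (x : space c) : ℕ := (mem_iUnion.1 x.2).choose

theorem mem_rung_index (x : space c) : x.1 ∈ rung c (index x) := (mem_iUnion.1 x.2).choose_spec

theorem index_eq (hc : ∀ m, 0 < c m) {x : space c} {n : ℕ} (hx : x.1 ∈ rung c n) :
    index x = n :=
  eq_of_mem_rung_of_mem_Ioo hc (mem_rung_index x) (mem_Ioo_of_mem_rung hx)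

def step (hc : ∀ m, 0 < c m) (x : space c) : space c :=
  ⟨rungMap c (index x) (index x + 1) x,
    mem_iUnion_of_mem _ (rungMap_mem_rung hc (mem_rung_index x))⟩

theorem step_eq (hc : ∀ m, 0 < c m) {x : space c} {n : ℕ} (hx : x.1 ∈ rung c n) :
    (step hc x : ℝ) = rungMap c n (n + 1) x := by
  simp only [step, index_eq hc hx]

theorem continuous_step (hc : ∀ m, 0 < c m) : Continuous (step hc) := by
  refine continuous_induced_rng.2 (continuous_iff_continuousAt.2 fun x => ?_)
  have hx := mem_rung_index x
  have hloc : (fun y => (step hc y : ℝ)) =ᶠ[nhds x]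
      fun y => rungMap c (index x) (index x + 1) y :=
    eventually_of_mem ((isOpen_preimage_rung hc _).mem_nhds hx) fun y hy => step_eq hc hy
  refine (continuousAt_congr hloc).2 ?_
  unfold rungMap
  fun_prop

theorem iterate_step (hc : ∀ m, 0 < c m) {x : space c} {n : ℕ} (hx : x.1 ∈ rung c n)
    (k : ℕ) : ((step hc)^[k] x : ℝ) = rungMap c n (n + k) x := by
  induction k with
  | zero => exact (rungMap_self hc n x).symm
  | succ k ih =>
    have hk : ((step hc)^[k] x : ℝ) ∈ rung c (n + k) := ih ▸ rungMap_mem_rung hc hx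
    rw [Function.iterate_succ_apply', step_eq hc hk, ih, rungMap_rungMap hc, add_assoc]

theorem ediam_image_iterate_le (hc : ∀ m, 0 < c m) {U : Set (space c)} {n : ℕ}
    (hU : ∀ x ∈ U, x.1 ∈ rung c n) (k : ℕ) :
    Metric.ediam ((step hc)^[k] '' U) ≤ ENNReal.ofReal (c (n + k)) := by
  refine Metric.ediam_image_le_iff.2 fun x hx y hy => ?_
  have hmem : ∀ z ∈ U, ((step hc)^[k] z : ℝ) ∈ rung c (n + k) :=
    fun z hz => iterate_step hc (hU z hz) k ▸ rungMap_mem_rung hc (hU z hz)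
  rw [edist_dist]
  refine ENNReal.ofReal_le_ofReal ?_
  simpa [Subtype.dist_eq] using Real.dist_le_of_mem_Icc (hmem x hx) (hmem y hy)

theorem dist_iterate_step (hc : ∀ m, 0 < c m) {x y : space c} {n : ℕ} (hx : x.1 ∈ rung c n)
    (hy : y.1 ∈ rung c n) (k : ℕ) :
    dist ((step hc)^[k] x) ((step hc)^[k] y) = c (n + k) / c n * dist x y := by
  rw [Subtype.dist_eq, iterate_step hc hx, iterate_step hc hy, dist_rungMap hc, Subtype.dist_eq]

theorem exists_pair_mem_rung (hc : ∀ m, 0 < c m) {U : Set (space c)} (hU : IsOpen U)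
    (hne : U.Nonempty) :
    ∃ n, ∃ x ∈ U, ∃ y ∈ U, x.1 ∈ rung c n ∧ y.1 ∈ rung c n ∧ 0 < dist x y := by
  obtain ⟨x, hxU⟩ := hne
  obtain ⟨δ, hδ, hball⟩ := Metric.isOpen_iff.1 hU x hxU
  have hℓ : 0 < min δ (c (index x)) / 2 := by have := hc (index x); positivity
  obtain ⟨y, hy, hyx⟩ := exists_mem_Icc_dist_eq (mem_rung_index x) hℓ.le
    (by simp only [add_sub_cancel_left]; linarith [min_le_right δ (c (index x))])
  refine ⟨index x, x, hxU, ⟨y, mem_iUnion_of_mem _ hy⟩, hball ?_, mem_rung_index x, hy, ?_⟩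
  · rw [Metric.mem_ball, Subtype.dist_eq, hyx]
    linarith [min_le_left δ (c (index x))]
  · rwa [dist_comm, Subtype.dist_eq, hyx]

theorem thicklySensitive_step (hc : ∀ m, 0 < c m) (hlong : ∀ R, IsThick {m | R < c m}) :
    ThicklySensitive (step hc) := by
  refine ⟨1, one_pos, fun U hU hne => ?_⟩
  obtain ⟨n, x, hxU, y, hyU, hx, hy, hxy⟩ := exists_pair_mem_rung hc hU hne
  refine ((hlong (c n / dist x y)).preimage_add_left n).mono fun k hk => ?_
  have hfar : 1 < dist ((step hc)^[k] x) ((step hc)^[k] y) := by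
    rw [dist_iterate_step hc hx hy, div_mul_eq_mul_div, one_lt_div (hc n)]
    exact (div_lt_iff₀ hxy).1 hk
  calc ENNReal.ofReal 1 < edist ((step hc)^[k] x) ((step hc)^[k] y) := by
        rw [edist_dist]; exact (ENNReal.ofReal_lt_ofReal_iff (one_pos.trans hfar)).2 hfar
    _ ≤ _ := Metric.edist_le_ediam_of_mem (mem_image_of_mem _ hxU) (mem_image_of_mem _ hyU)

theorem not_syndeticallySensitive_step (hc : ∀ m, 0 < c m)
    (hshort : ∀ ε > 0, IsThick {m | c m ≤ ε}) : ¬ SyndeticallySensitive (step hc) := by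
  rintro ⟨ε, hε, hsyn⟩
  have h₀ : start c 0 ∈ rung c 0 := ⟨le_rfl, by linarith [hc 0]⟩
  refine (hshort ε hε).not_isSyndetic_compl <|
    (hsyn _ (isOpen_preimage_rung hc 0) ⟨⟨_, mem_iUnion_of_mem 0 h₀⟩, h₀⟩).mono
      fun m hm => ?_
  have hlt := hm.trans_le (ediam_image_iterate_le hc (fun x hx => hx) m)
  rw [zero_add, ENNReal.ofReal_lt_ofReal_iff (hc m)] at hlt
  exact hlt.not_ge

end Ladder

end

noncomputable def oscillatingLength (m : ℕ) : ℝ :=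
  if Even (Nat.sqrt m) then Nat.sqrt m + 1 else 1 / (Nat.sqrt m + 1)

theorem oscillatingLength_pos (m : ℕ) : 0 < oscillatingLength m := by
  unfold oscillatingLength
  split_ifs <;> positivity

theorem isThick_lt_oscillatingLength (R : ℝ) : IsThick {m | R < oscillatingLength m} := by
  have hlarge : ∀ᶠ j : ℕ in atTop, R < j + 1 :=
    (tendsto_natCast_atTop_atTop.eventually_gt_atTop R).mono fun j hj => by linarith
  refine (isThick_setOf_sqrt (Nat.frequently_even.and_eventually hlarge)).mono fun m hm => ?_
  simpa only [mem_ofPred_eq, oscillatingLength, if_pos hm.1] using hm.2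

theorem isThick_oscillatingLength_le {ε : ℝ} (hε : 0 < ε) :
    IsThick {m | oscillatingLength m ≤ ε} := by
  have hsmall : ∀ᶠ j : ℕ in atTop, 1 / ((j : ℝ) + 1) ≤ ε :=
    tendsto_one_div_add_atTop_nhds_zero_nat.eventually (eventually_le_nhds hε)
  refine (isThick_setOf_sqrt (Nat.frequently_odd.and_eventually hsmall)).mono fun m hm => ?_
  simpa only [mem_ofPred_eq, oscillatingLength, if_neg (Nat.not_even_iff_odd.2 hm.1)] using hm.2

/-- There is a cascade on a complete metric space (a closed subset of `ℝ`) which is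
thickly sensitive but not syndetically sensitive. -/
theorem exists_thicklySensitive_not_syndeticallySensitive :
    ∃ (X : Set ℝ), IsClosed X ∧
      ∃ f : X → X, Continuous f ∧ ThicklySensitive f ∧ ¬ SyndeticallySensitive f :=
  ⟨_, Ladder.isClosed_space oscillatingLength_pos,
    _, Ladder.continuous_step oscillatingLength_pos,
    Ladder.thicklySensitive_step _ isThick_lt_oscillatingLength,
    Ladder.not_syndeticallySensitive_step _ fun _ => isThick_oscillatingLength_le⟩
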